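/- arXiv:1712.07072 — 4 statements merged into one kernel-verified Lean document; each statement's English description precedes it below -/
import Mathlib

section
/- For every n ≥ 2l, the complete bipartite graph K_{⌊n/2⌋,⌈n/2⌉} contains at least (1/l!) · ∏_{i=0}^{l-1} ⌊(n-2i)²/4⌋ matchings of size l. Consequently the maximum number of size-l matchings over all triangle-free n-vertex graphs equals (1/l!) · ∏_{i=0}^{l-1} ⌊(n-2i)²/4⌋. -/
open SimpleGraph

universe u v

/-- An (injective) copy of the graph `F` inside the graph `G`. -/
structure GraphCopy {α : Type u} {β : Type v} (F : SimpleGraph α) (G : SimpleGraph β) where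
  toFun : α → β
  inj : Function.Injective toFun
  adj : ∀ {a b : α}, F.Adj a b → G.Adj (toFun a) (toFun b)

/-- `G` contains a copy of `F` (i.e. a subgraph isomorphic to `F`). -/
def Contains {α : Type u} {β : Type v} (F : SimpleGraph α) (G : SimpleGraph β) : Prop :=
  Nonempty (GraphCopy F G)

/-- `G` contains `k` pairwise vertex-disjoint copies of `F`. -/
def HasDisjCopies {α : Type u} {β : Type v} (F : SimpleGraph α) (G : SimpleGraph β)
    (k : ℕ) : Prop :=
  ∃ c : Fin k → GraphCopy F G,
    ∀ i j : Fin k, i ≠ j → Disjoint (Set.range (c i).toFun) (Set.range (c j).toFun)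

/-- The join of two graphs: their disjoint union together with all cross edges. -/
def gJoin {α : Type u} {β : Type v} (G : SimpleGraph α) (H : SimpleGraph β) :
    SimpleGraph (α ⊕ β) where
  Adj x y :=
    match x, y with
    | Sum.inl a, Sum.inl b => G.Adj a b
    | Sum.inr a, Sum.inr b => H.Adj a b
    | _, _ => True
  symm := ⟨by rintro (a | a) (b | b) h <;> first | exact h.symm | trivial⟩
  loopless := ⟨by rintro (a | a) h; exacts [G.irrefl h, H.irrefl h]⟩

/-- The Turán number: maximum number of edges of an `n`-vertex `F`-free graph. -/
noncomputable def exNum {α : Type u} (n : ℕ) (F : SimpleGraph α) : ℕ :=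
  sSup {m : ℕ | ∃ G : SimpleGraph (Fin n), ¬ Contains F G ∧ m = G.edgeSet.ncard}

/-- The number of (unlabeled) copies of `H` in `G`, i.e. the number of subgraphs of `G`
isomorphic to `H`. -/
noncomputable def copyCount {α : Type u} {β : Type v} (H : SimpleGraph α)
    (G : SimpleGraph β) : ℕ :=
  {A : G.Subgraph | Nonempty (H ≃g A.coe)}.ncard

/-- The generalized Turán number: maximum number of copies of `H` in an
`n`-vertex `F`-free graph. -/
noncomputable def exGen {α : Type u} {γ : Type v} (n : ℕ) (H : SimpleGraph α)
    (F : SimpleGraph γ) : ℕ :=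
  sSup {m : ℕ | ∃ G : SimpleGraph (Fin n), ¬ Contains F G ∧ m = copyCount H G}

/-- `s` is a matching in `G`: a set of edges of `G`, pairwise vertex-disjoint. -/
def IsMatchingSet {V : Type u} (G : SimpleGraph V) (s : Finset (Sym2 V)) : Prop :=
  ↑s ⊆ G.edgeSet ∧ ∀ e ∈ s, ∀ f ∈ s, e ≠ f → ∀ x : V, x ∈ e → x ∉ f

/-- The number of matchings of size `l` in `G`. -/
noncomputable def matchCount {V : Type u} (G : SimpleGraph V) (l : ℕ) : ℕ :=
  {s : Finset (Sym2 V) | s.card = l ∧ IsMatchingSet G s}.ncard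

/-- `G` contains `k` pairwise vertex-disjoint triangles. -/
def HasDisjTriangles {V : Type u} (G : SimpleGraph V) (k : ℕ) : Prop :=
  ∃ S : Finset (Finset V), S.card = k ∧ (∀ T ∈ S, G.IsNClique 3 T) ∧
    (S : Set (Finset V)).Pairwise fun T T' => Disjoint T T'

/-- The number of copies of `lK₃` (families of `l` pairwise disjoint triangles) in `G`. -/
noncomputable def disjTriFamCount {V : Type u} (G : SimpleGraph V) (l : ℕ) : ℕ :=
  {S : Finset (Finset V) | S.card = l ∧ (∀ T ∈ S, G.IsNClique 3 T) ∧
    (S : Set (Finset V)).Pairwise fun T T' => Disjoint T T'}.ncard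

/-!
Count ordered matchings, i.e. `l`-tuples of pairwise disjoint edges: each matching of size `l`
is enumerated by exactly `l!` of them. In a triangle-free graph the first edge of an ordered
matching inside a set of `m` vertices is one of at most `⌊m²/4⌋` edges (Mantel), and the rest is
an ordered matching inside the remaining `m - 2` vertices, so there are at most
`∏_{i<l} ⌊(n-2i)²/4⌋` ordered matchings. In `K_{a,b}` a pair of injections `Fin l ↪ A`,
`Fin l ↪ B` gives an ordered matching, so there are at least `a^(l) b^(l)` (falling powers), and
for `a = ⌊n/2⌋`, `b = ⌈n/2⌉` the factors `(a - i)(b - i)` are exactly `⌊(n-2i)²/4⌋`.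
-/

open Finset

theorem Nat.div_two_mul_sub_div_two (m : ℕ) : m / 2 * (m - m / 2) = m ^ 2 / 4 := by
  obtain ⟨k, rfl | rfl⟩ := m.even_or_odd'
  · rw [show (2 * k) ^ 2 = 4 * (k * k) by ring, show 2 * k / 2 = k by omega,
      show 2 * k - k = k by omega]
    omega
  · rw [show (2 * k + 1) ^ 2 = 4 * (k * (k + 1)) + 1 by ring, show (2 * k + 1) / 2 = k by omega,
      show 2 * k + 1 - k = k + 1 by omega]
    omega

theorem Nat.descFactorial_div_two_mul_descFactorial (n l : ℕ) :
    (n / 2).descFactorial l * (n - n / 2).descFactorial l =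
      ∏ i ∈ range l, (n - 2 * i) ^ 2 / 4 := by
  rw [descFactorial_eq_prod_range, descFactorial_eq_prod_range, ← prod_mul_distrib]
  refine prod_congr rfl fun i _ => ?_
  rw [← div_two_mul_sub_div_two]
  congr 1 <;> omega

section InjectiveTuples

variable {X : Type*} [Fintype X] [DecidableEq X]

theorem card_filter_injective_image_eq (s : Finset X) :
    #{f : Fin #s → X | Function.Injective f ∧ univ.image f = s} = (#s).factorial := by
  rw [← Fintype.card_fin #s, ← Fintype.card_equiv s.equivFin.symm, Fintype.card_fin, ← card_univ]
  symm
  refine card_bij (fun σ _ => Subtype.val ∘ σ) (fun σ _ => ?_) (fun σ _ τ _ h => ?_) fun f hf => ?_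
  · refine mem_filter.2 ⟨mem_univ _, Subtype.val_injective.comp σ.injective, ?_⟩
    ext x
    simp only [mem_image, mem_univ, true_and, Function.comp_apply]
    exact ⟨fun ⟨i, hi⟩ => hi ▸ (σ i).2, fun hx => ⟨σ.symm ⟨x, hx⟩, by simp⟩⟩
  · exact Equiv.ext fun i => Subtype.ext (congrFun h i)
  · obtain ⟨hinj, himg⟩ := (mem_filter.1 hf).2
    have hmem (i : Fin #s) : f i ∈ s := himg ▸ mem_image_of_mem f (mem_univ i)
    have hbij : Function.Bijective fun i => (⟨f i, hmem i⟩ : s) :=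
      (Fintype.bijective_iff_injective_and_card _).2
        ⟨fun i j h => hinj (congrArg Subtype.val h), by simp⟩
    exact ⟨Equiv.ofBijective _ hbij, mem_univ _, rfl⟩

theorem card_filter_injective_and_image (P : Finset X → Prop) [DecidablePred P] (l : ℕ) :
    #{f : Fin l → X | Function.Injective f ∧ P (univ.image f)} =
      #{s : Finset X | #s = l ∧ P s} * l.factorial := by
  rw [card_eq_sum_card_fiberwise (f := fun f => univ.image f) (t := {s | #s = l ∧ P s}),
    ← smul_eq_mul, ← sum_const]
  · refine sum_congr rfl fun s hs => ?_
    obtain ⟨rfl, hP⟩ := (mem_filter.1 hs).2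
    rw [← card_filter_injective_image_eq s, filter_filter]
    refine congrArg card (filter_congr fun f _ => ?_)
    exact ⟨fun ⟨⟨h1, _⟩, h2⟩ => ⟨h1, h2⟩, fun ⟨h1, h2⟩ => ⟨⟨h1, by rwa [h2]⟩, h2⟩⟩
  · intro f hf
    obtain ⟨hinj, hP⟩ := (mem_filter.1 hf).2
    simp [card_image_of_injective _ hinj, hP]

end InjectiveTuples

namespace SimpleGraph

theorem matchCount_le_of_isContained {V W : Type*} [Finite W] {H : SimpleGraph V}
    {G : SimpleGraph W} (h : H ⊑ G) (l : ℕ) : matchCount H l ≤ matchCount G l := by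
  obtain ⟨φ⟩ := h
  refine Set.ncard_le_ncard_of_injOn (fun s => s.map φ.toEmbedding.sym2Map) ?_
    (fun s _ t _ hst => Finset.map_injective _ hst) (Set.toFinite _)
  rintro s ⟨hcard, hE, hdisj⟩
  refine ⟨by simp [hcard], ?_, ?_⟩
  · intro e he
    obtain ⟨e, he', rfl⟩ := mem_map.1 he
    exact φ.toHom.map_mem_edgeSet (hE he')
  · simp only [mem_map, Function.Embedding.sym2Map_apply]
    rintro _ ⟨e, he, rfl⟩ _ ⟨e', he', rfl⟩ hne x hx hx'
    obtain ⟨a, ha, rfl⟩ := Sym2.mem_map.1 hx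
    obtain ⟨b, hb, hab⟩ := Sym2.mem_map.1 hx'
    rw [φ.toEmbedding.injective hab] at hb
    exact hdisj e he e' he' (fun h => hne (h ▸ rfl)) a ha hb

theorem card_sdiff_toFinset_of_mem_edgeSet {V : Type*} [DecidableEq V] {G : SimpleGraph V}
    {e : Sym2 V} {s : Finset V} (he : e ∈ G.edgeSet) (hs : e.toFinset ⊆ s) :
    #(s \ e.toFinset) = #s - 2 := by
  rw [card_sdiff_of_subset hs, Sym2.card_toFinset_of_not_isDiag _ (G.not_isDiag_of_mem_edgeSet he)]

theorem CliqueFree.card_edgeFinset_le_sq_div_four {V : Type*} [Fintype V] {G : SimpleGraph V}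
    [DecidableRel G.Adj] (hG : G.CliqueFree 3) : #G.edgeFinset ≤ Fintype.card V ^ 2 / 4 := by
  have h : #G.edgeFinset ≤ _ := hG.card_edgeFinset_le (r := 2)
  simp only [Nat.choose_eq_zero_of_lt (Nat.mod_lt _ two_pos), add_zero, Nat.add_one_sub_one,
    mul_one] at h
  exact h.trans (Nat.div_le_div_right (Nat.sub_le _ _))

variable {V : Type*} [Fintype V] [DecidableEq V]

theorem CliqueFree.card_filter_edgeFinset_subset_le {G : SimpleGraph V} [DecidableRel G.Adj]
    (hG : G.CliqueFree 3) (s : Finset V) :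
    #{e ∈ G.edgeFinset | e.toFinset ⊆ s} ≤ #s ^ 2 / 4 := by
  have hind : (G.induce (s : Set V)).CliqueFree 3 := hG.comap (Embedding.induce _).isContained
  have h := hind.card_edgeFinset_le_sq_div_four
  rw [← card_map (Function.Embedding.subtype (· ∈ (s : Set V))).sym2Map] at h
  convert h using 2
  · convert (map_edgeFinset_induce (G := G) (s := (s : Set V))).symm
    ext e
    simp [Finset.subset_iff, Finset.mem_sym2_iff, Sym2.mem_toFinset]
  · simp

open Classical in
noncomputable def orderedMatchings (G : SimpleGraph V) (s : Finset V) (l : ℕ) :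
    Finset (Fin l → Sym2 V) :=
  {f | (∀ i, f i ∈ G.edgeSet ∧ (f i).toFinset ⊆ s) ∧
    Pairwise fun i j => Disjoint (f i).toFinset (f j).toFinset}

variable {G : SimpleGraph V} {s : Finset V} {l : ℕ}

theorem mem_orderedMatchings {f : Fin l → Sym2 V} :
    f ∈ G.orderedMatchings s l ↔ (∀ i, f i ∈ G.edgeSet ∧ (f i).toFinset ⊆ s) ∧
      Pairwise fun i j => Disjoint (f i).toFinset (f j).toFinset := by
  classical
  simp [orderedMatchings]

theorem cons_mem_orderedMatchings {e : Sym2 V} {f : Fin l → Sym2 V} :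
    Fin.cons e f ∈ G.orderedMatchings s (l + 1) ↔
      (e ∈ G.edgeSet ∧ e.toFinset ⊆ s) ∧ f ∈ G.orderedMatchings (s \ e.toFinset) l := by
  simp only [mem_orderedMatchings, Fin.forall_fin_succ, pairwise_fin_succ_iff, Fin.cons_zero,
    Fin.cons_succ, subset_sdiff, disjoint_comm (a := e.toFinset)]
  grind

theorem card_orderedMatchings_succ [DecidableRel G.Adj] :
    #(G.orderedMatchings s (l + 1)) =
      ∑ e ∈ G.edgeFinset with e.toFinset ⊆ s, #(G.orderedMatchings (s \ e.toFinset) l) := by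
  rw [← card_sigma]
  refine card_nbij' (fun f => ⟨f 0, Fin.tail f⟩) (fun p => Fin.cons p.1 p.2) ?_ ?_
    (fun f _ => Fin.cons_self_tail f) (fun p _ => by simp)
  · intro f hf
    rw [mem_coe, ← Fin.cons_self_tail f, cons_mem_orderedMatchings] at hf
    simpa using hf
  · rintro ⟨e, f⟩ h
    simp only [coe_sigma, Set.mem_sigma_iff, mem_coe, mem_filter, mem_edgeFinset] at h
    exact cons_mem_orderedMatchings.2 h

theorem CliqueFree.card_orderedMatchings_le (hG : G.CliqueFree 3) (s : Finset V) (l : ℕ) :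
    #(G.orderedMatchings s l) ≤ ∏ i ∈ range l, (#s - 2 * i) ^ 2 / 4 := by
  classical
  induction l generalizing s with
  | zero => exact (card_le_univ _).trans (by simp)
  | succ l ih =>
    set E := {e ∈ G.edgeFinset | e.toFinset ⊆ s}
    have hrest : ∀ e ∈ E, #(G.orderedMatchings (s \ e.toFinset) l) ≤
        ∏ i ∈ range l, (#s - 2 * (i + 1)) ^ 2 / 4 := by
      intro e he
      obtain ⟨he, hs⟩ := mem_filter.1 he
      refine (ih _).trans_eq (prod_congr rfl fun i _ => ?_)
      rw [card_sdiff_toFinset_of_mem_edgeSet (mem_edgeFinset.1 he) hs]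
      congr 2
      omega
    calc #(G.orderedMatchings s (l + 1))
        = ∑ e ∈ E, #(G.orderedMatchings (s \ e.toFinset) l) := card_orderedMatchings_succ
      _ ≤ #E * ∏ i ∈ range l, (#s - 2 * (i + 1)) ^ 2 / 4 := sum_le_card_nsmul _ _ _ hrest
      _ ≤ #s ^ 2 / 4 * ∏ i ∈ range l, (#s - 2 * (i + 1)) ^ 2 / 4 :=
        Nat.mul_le_mul_right _ (hG.card_filter_edgeFinset_subset_le s)
      _ = ∏ i ∈ range (l + 1), (#s - 2 * i) ^ 2 / 4 := by
        rw [prod_range_succ', mul_zero, Nat.sub_zero, mul_comm]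

theorem injective_of_mem_orderedMatchings {f : Fin l → Sym2 V}
    (hf : f ∈ G.orderedMatchings s l) : Function.Injective f := by
  intro i j hij
  by_contra hne
  have : Disjoint (f i).toFinset (f j).toFinset := (mem_orderedMatchings.1 hf).2 hne
  rw [hij, disjoint_self_iff_empty] at this
  exact Sym2.toFinset_ne_empty _ this

theorem mem_orderedMatchings_univ {f : Fin l → Sym2 V} :
    f ∈ G.orderedMatchings univ l ↔
      Function.Injective f ∧ IsMatchingSet G (univ.image f) := by
  refine ⟨fun hf => ⟨injective_of_mem_orderedMatchings hf, ?_⟩, fun ⟨hinj, hE, hdisj⟩ => ?_⟩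
  · obtain ⟨hE, hdisj⟩ := mem_orderedMatchings.1 hf
    refine ⟨by simpa [Set.range_subset_iff] using fun i => (hE i).1, ?_⟩
    simp only [mem_image, mem_univ, true_and]
    rintro _ ⟨i, rfl⟩ _ ⟨j, rfl⟩ hij x hx hx'
    exact Finset.disjoint_left.1 (hdisj (ne_of_apply_ne f hij)) (Sym2.mem_toFinset.2 hx)
      (Sym2.mem_toFinset.2 hx')
  · have hmem (i : Fin l) : f i ∈ univ.image f := mem_image_of_mem f (mem_univ i)
    refine mem_orderedMatchings.2 ⟨fun i => ⟨hE (hmem i), subset_univ _⟩, fun i j hij => ?_⟩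
    exact Finset.disjoint_left.2 fun x hx hx' => hdisj _ (hmem i) _ (hmem j) (hinj.ne hij) x
      (Sym2.mem_toFinset.1 hx) (Sym2.mem_toFinset.1 hx')

theorem card_orderedMatchings_univ (G : SimpleGraph V) (l : ℕ) :
    #(G.orderedMatchings univ l) = matchCount G l * l.factorial := by
  classical
  have : G.orderedMatchings univ l =
      ({f | Function.Injective f ∧ IsMatchingSet G (univ.image f)} : Finset (Fin l → Sym2 V)) := by
    ext f
    rw [mem_orderedMatchings_univ, mem_filter, and_iff_right (mem_univ _)]
  rw [this, card_filter_injective_and_image, matchCount, ← Set.ncard_coe_finset]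
  congr
  ext s
  simp

theorem CliqueFree.matchCount_mul_factorial_le (hG : G.CliqueFree 3) (l : ℕ) :
    matchCount G l * l.factorial ≤ ∏ i ∈ range l, (Fintype.card V - 2 * i) ^ 2 / 4 := by
  simpa [card_orderedMatchings_univ] using hG.card_orderedMatchings_le univ l

theorem descFactorial_mul_descFactorial_le_matchCount_completeBipartiteGraph (α β : Type*)
    [Fintype α] [Fintype β] [DecidableEq α] [DecidableEq β] (l : ℕ) :
    (Fintype.card α).descFactorial l * (Fintype.card β).descFactorial l ≤
      matchCount (completeBipartiteGraph α β) l * l.factorial := by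
  have hcard : Fintype.card ((Fin l ↪ α) × (Fin l ↪ β)) =
      (Fintype.card α).descFactorial l * (Fintype.card β).descFactorial l := by
    simp [Fintype.card_prod]
  rw [← hcard, ← card_univ, ← card_orderedMatchings_univ]
  refine card_le_card_of_injOn (fun p i => s(Sum.inl (p.1 i), Sum.inr (p.2 i))) ?_ ?_
  · intro p _
    refine mem_orderedMatchings.2 ⟨fun i => by simp, fun i j hij => ?_⟩
    simp [Sym2.toFinset_mk_eq, p.1.injective.ne hij.symm, p.2.injective.ne hij.symm]
  · intro p _ q _ h
    simp only [funext_iff, Sym2.eq_iff, Sum.inl.injEq, Sum.inr.injEq, reduceCtorEq, and_false,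
      or_false] at h
    exact Prod.ext (DFunLike.ext _ _ fun i => (h i).1) (DFunLike.ext _ _ fun i => (h i).2)

end SimpleGraph

theorem stmt4_general (n l : ℕ) :
    (∏ i ∈ Finset.range l, (n - 2 * i) ^ 2 / 4) ≤
      matchCount (completeBipartiteGraph (Fin (n / 2)) (Fin (n - n / 2))) l * l.factorial
    ∧ ∃ M : ℕ,
      IsGreatest {m : ℕ | ∃ G : SimpleGraph (Fin n), G.CliqueFree 3 ∧ m = matchCount G l} M
      ∧ M * l.factorial = ∏ i ∈ Finset.range l, (n - 2 * i) ^ 2 / 4 := by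
  set K := completeBipartiteGraph (Fin (n / 2)) (Fin (n - n / 2))
  have hK : ∏ i ∈ range l, (n - 2 * i) ^ 2 / 4 ≤ matchCount K l * l.factorial := by
    simpa [← Nat.descFactorial_div_two_mul_descFactorial] using
      descFactorial_mul_descFactorial_le_matchCount_completeBipartiteGraph
        (Fin (n / 2)) (Fin (n - n / 2)) l
  have hup (G : SimpleGraph (Fin n)) (hG : G.CliqueFree 3) :
      matchCount G l * l.factorial ≤ ∏ i ∈ range l, (n - 2 * i) ^ 2 / 4 := by
    simpa using hG.matchCount_mul_factorial_le l
  let e : Fin (n / 2) ⊕ Fin (n - n / 2) ≃ Fin n := finSumFinEquiv.trans (finCongr (by omega))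
  set G₀ := K.map e.toEmbedding
  have hG₀ : G₀.CliqueFree 3 :=
    ((CompleteBipartiteGraph.bicoloring _ _).colorable.cliqueFree (by simp)).comap
      (Iso.map e K).isContained'
  have hlow : ∏ i ∈ range l, (n - 2 * i) ^ 2 / 4 ≤ matchCount G₀ l * l.factorial :=
    hK.trans (Nat.mul_le_mul_right _ (matchCount_le_of_isContained (Iso.map e K).isContained l))
  refine ⟨hK, matchCount G₀ l, ⟨⟨G₀, hG₀, rfl⟩, ?_⟩, (hup G₀ hG₀).antisymm hlow⟩
  rintro _ ⟨G, hG, rfl⟩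
  exact Nat.le_of_mul_le_mul_right ((hup G hG).trans hlow) l.factorial_pos

/-- The balanced complete bipartite graph attains
`(1/l!) ∏_{i<l} ⌊(n-2i)²/4⌋` matchings of size `l`, and this is the maximum over all
triangle-free graphs on `n` vertices. -/
theorem stmt4 (n l : ℕ) (hn : 2 * l ≤ n) :
    (∏ i ∈ Finset.range l, (n - 2 * i) ^ 2 / 4) ≤
      matchCount (completeBipartiteGraph (Fin (n / 2)) (Fin (n - n / 2))) l * l.factorial
    ∧ ∃ M : ℕ,
      IsGreatest {m : ℕ | ∃ G : SimpleGraph (Fin n), G.CliqueFree 3 ∧ m = matchCount G l} M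
      ∧ M * l.factorial = ∏ i ∈ Finset.range l, (n - 2 * i) ^ 2 / 4 :=
  stmt4_general n l
end

section
/- Let s ≥ t ≥ 2 and k ≥ 2 be integers and set x = ⌈(kt - s)/(k - 1)⌉ - 1, and assume x ≥ 1 and n ≥ s. Then the graph K_{s-x} + T_x(n - s + x), the join of a clique on s - x vertices with the x-partite Turán graph on n - s + x vertices, contains no k pairwise vertex-disjoint copies of K_t, and it contains at least ⌊(n - s + x)/x⌋^x copies of K_s. -/
open SimpleGraph

universe u v

/-! A copy of `K_t` meets the `K_{x+1}`-free Turán graph `T_x(m)` in at most `x` vertices, so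
`k` disjoint copies would need `k (t - x)` vertices of the clique `K_{s-x}`, more than it has
since `s + (k - 1) x < k t`. Conversely, every choice of one vertex from each of the `x` parts of
`T_x(m)` (at least `⌊m / x⌋` choices per part) together with `K_{s-x}` spans a `K_s`. -/

open Finset

namespace GraphCopy

variable {α : Type u} {β : Type v} {F : SimpleGraph α} {G : SimpleGraph β}

def toCopy (c : GraphCopy F G) : Copy F G := ⟨⟨c.toFun, c.adj⟩, c.inj⟩

@[simp]
theorem toCopy_toEmbedding_apply (c : GraphCopy F G) (a : α) :
    c.toCopy.toEmbedding a = c.toFun a := rfl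

end GraphCopy

theorem SimpleGraph.IsClique.card_le_of_cliqueFree {β : Type v} {H : SimpleGraph β} {r : ℕ}
    {u : Finset β} (hH : H.CliqueFree (r + 1)) (hu : H.IsClique u) : #u ≤ r := by
  by_contra! hr
  obtain ⟨w, hwu, hw⟩ := exists_subset_card_eq hr
  exact hH w ⟨hu.subset (by simpa using hwu), hw⟩

section Join

variable {α : Type u} {β : Type v} {G : SimpleGraph α} {H : SimpleGraph β}

theorem isClique_toRight_of_isClique_gJoin {u : Finset (α ⊕ β)}
    (hu : (gJoin G H).IsClique (u : Set (α ⊕ β))) : H.IsClique (u.toRight : Set β) :=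
  fun a ha b hb hab =>
    show (gJoin G H).Adj (.inr a) (.inr b) from
      hu (by simpa using ha) (by simpa using hb) (by simpa using hab)

theorem sub_le_card_toLeft_of_isNClique_gJoin {r t : ℕ} (hH : H.CliqueFree (r + 1))
    {u : Finset (α ⊕ β)} (hu : (gJoin G H).IsNClique t u) : t - r ≤ #u.toLeft := by
  have hright := (isClique_toRight_of_isClique_gJoin hu.isClique).card_le_of_cliqueFree hH
  have := card_toLeft_add_card_toRight (u := u)
  have := hu.card_eq
  omega

theorem mul_sub_le_card_of_hasDisjCopies_gJoin [Fintype α] {r t k : ℕ}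
    (hH : H.CliqueFree (r + 1)) (h : HasDisjCopies (⊤ : SimpleGraph (Fin t)) (gJoin G H) k) :
    k * (t - r) ≤ Fintype.card α := by
  classical
  obtain ⟨c, hdisj⟩ := h
  set left : Fin k → Finset α := fun i => (univ.map (c i).toCopy.toEmbedding).toLeft
  have hleft : ∀ i, t - r ≤ #(left i) := fun i =>
    sub_le_card_toLeft_of_isNClique_gJoin hH (by simpa using isNClique_map_copy_top (c i).toCopy)
  have hleft_disj : ((univ : Finset (Fin k)) : Set (Fin k)).PairwiseDisjoint left :=
    fun i _ j _ hij => disjoint_left.2 fun a hi hj =>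
      Set.disjoint_left.1 (hdisj i j hij) (by simpa [left] using hi) (by simpa [left] using hj)
  calc k * (t - r) = ∑ _ : Fin k, (t - r) := by simp
    _ ≤ ∑ i, #(left i) := sum_le_sum fun i _ => hleft i
    _ = #(univ.biUnion left) := (card_biUnion hleft_disj).symm
    _ ≤ Fintype.card α := card_le_univ _

theorem ncard_cliqueSet_le_ncard_cliqueSet_gJoin_top [Fintype α] [Finite β] (r : ℕ) :
    (H.cliqueSet r).ncard ≤
      ((gJoin (⊤ : SimpleGraph α) H).cliqueSet (Fintype.card α + r)).ncard := by
  refine Set.ncard_le_ncard_of_injOn (univ.disjSum ·) (fun w hw => ?_)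
    (fun w _ w' _ h => (disjSum_inj.1 h).2) (Set.toFinite _)
  refine ⟨fun a ha b hb hab => ?_, by simp [card_disjSum, hw.card_eq]⟩
  simp only [mem_coe, mem_disjSum, mem_univ, true_and] at ha hb
  obtain ⟨a, rfl⟩ | ⟨a, ha, rfl⟩ := ha <;> obtain ⟨b, rfl⟩ | ⟨b, hb, rfl⟩ := hb
  · exact fun h => hab (congrArg Sum.inl h)
  · trivial
  · trivial
  · exact hw.isClique ha hb fun h => hab (congrArg Sum.inr h)

end Join

section Turan

variable {m r : ℕ}

/-- The parts of `T_r(m)` are the residue classes mod `r`; this is the `j`-th vertex of part `i`. -/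
def turanVertex (i : Fin r) (j : Fin (m / r)) : Fin m :=
  Fin.castLE (Nat.div_mul_le_self m r) (finProdFinEquiv (j, i))

theorem turanVertex_mod (i : Fin r) (j : Fin (m / r)) : (turanVertex i j : ℕ) % r = i := by
  simp [turanVertex, Nat.mod_eq_of_lt i.isLt]

theorem turanVertex_injective_right (i : Fin r) :
    Function.Injective (turanVertex (m := m) i) := fun j j' h => by
  simpa using finProdFinEquiv.injective (Fin.castLE_injective _ h)

theorem turanVertex_eq_iff {i i' : Fin r} {j j' : Fin (m / r)} :
    turanVertex i j = turanVertex i' j' ↔ i = i' ∧ j = j' := by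
  refine ⟨fun h => ?_, fun ⟨hi, hj⟩ => hi ▸ hj ▸ rfl⟩
  have hi : i = i' := Fin.ext (by rw [← turanVertex_mod i j, h, turanVertex_mod])
  subst hi
  exact ⟨rfl, turanVertex_injective_right i h⟩

theorem turanVertex_section_injective (g : Fin r → Fin (m / r)) :
    Function.Injective fun i => turanVertex i (g i) := fun _ _ h => (turanVertex_eq_iff.1 h).1

def turanTransversal (g : Fin r → Fin (m / r)) : Finset (Fin m) :=
  univ.map ⟨_, turanVertex_section_injective g⟩

theorem isNClique_turanTransversal (g : Fin r → Fin (m / r)) :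
    (turanGraph m r).IsNClique r (turanTransversal g) := by
  refine ⟨?_, by simp [turanTransversal]⟩
  simp only [turanTransversal, coe_map, coe_univ, Set.image_univ]
  rintro _ ⟨i, rfl⟩ _ ⟨i', rfl⟩ hne
  change (turanVertex i (g i) : ℕ) % r ≠ (turanVertex i' (g i') : ℕ) % r
  rw [turanVertex_mod, turanVertex_mod]
  exact fun h => hne (by simp [Fin.ext h])

theorem turanTransversal_injective :
    Function.Injective (turanTransversal (m := m) (r := r)) := fun g g' h => funext fun i => by
  have hi : turanVertex i (g i) ∈ turanTransversal g' := h ▸ by simp [turanTransversal]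
  obtain ⟨i', -, hi'⟩ := mem_map.1 hi
  obtain ⟨rfl, hg⟩ := turanVertex_eq_iff.1 hi'
  exact hg.symm

theorem pow_div_le_ncard_cliqueSet_turanGraph :
    (m / r) ^ r ≤ ((turanGraph m r).cliqueSet r).ncard := by
  calc (m / r) ^ r = (Set.univ : Set (Fin r → Fin (m / r))).ncard := by simp
    _ ≤ _ := Set.ncard_le_ncard_of_injOn turanTransversal
      (fun g _ => isNClique_turanTransversal g) turanTransversal_injective.injOn (Set.toFinite _)

end Turan

theorem add_sub_one_mul_lt_of_eq_div_sub_one {s t k x : ℕ}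
    (hx : x = (k * t - s + k - 2) / (k - 1) - 1) (hx1 : 1 ≤ x) : s + (k - 1) * x < k * t := by
  have hk : 0 < k - 1 := Nat.pos_of_ne_zero fun h => by simp [h] at hx; omega
  have hdiv := Nat.div_mul_le_self (k * t - s + k - 2) (k - 1)
  rw [show (k * t - s + k - 2) / (k - 1) = x + 1 by omega, add_one_mul, mul_comm] at hdiv
  omega

theorem stmt9_general (s t k n x : ℕ) (hst : t ≤ s)
    (hx : x = (k * t - s + k - 2) / (k - 1) - 1) (hx1 : 1 ≤ x) :
    ¬ HasDisjCopies (⊤ : SimpleGraph (Fin t))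
        (gJoin (⊤ : SimpleGraph (Fin (s - x))) (turanGraph (n - s + x) x)) k
    ∧ ((n - s + x) / x) ^ x ≤
        ((gJoin (⊤ : SimpleGraph (Fin (s - x)))
          (turanGraph (n - s + x) x)).cliqueSet s).ncard := by
  have hkey := add_sub_one_mul_lt_of_eq_div_sub_one hx hx1
  have hxt : x < t := Nat.lt_of_mul_lt_mul_left (a := k - 1) <| by
    rw [Nat.sub_one_mul k t]; omega
  refine ⟨fun h => ?_, ?_⟩
  · have hcard := mul_sub_le_card_of_hasDisjCopies_gJoin (turanGraph_cliqueFree hx1) h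
    rw [Fintype.card_fin, Nat.mul_sub] at hcard
    have := Nat.sub_one_mul k x
    have := Nat.mul_le_mul_left k hxt.le
    omega
  · have hjoin := ncard_cliqueSet_le_ncard_cliqueSet_gJoin_top
      (α := Fin (s - x)) (H := turanGraph (n - s + x) x) x
    rw [Fintype.card_fin, Nat.sub_add_cancel (hxt.le.trans hst)] at hjoin
    exact pow_div_le_ncard_cliqueSet_turanGraph.trans hjoin

/-- With `x = ⌈(kt-s)/(k-1)⌉ - 1`, the graph `K_{s-x} + T_x(n-s+x)` has
no `k` disjoint copies of `K_t` and contains at least `⌊(n-s+x)/x⌋^x` copies of `K_s`. -/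
theorem stmt9 (s t k n x : ℕ) (hst : t ≤ s) (ht : 2 ≤ t) (hk : 2 ≤ k)
    (hx : x = (k * t - s + k - 2) / (k - 1) - 1) (hx1 : 1 ≤ x) (hn : s ≤ n) :
    ¬ HasDisjCopies (⊤ : SimpleGraph (Fin t))
        (gJoin (⊤ : SimpleGraph (Fin (s - x))) (turanGraph (n - s + x) x)) k
    ∧ ((n - s + x) / x) ^ x ≤
        ((gJoin (⊤ : SimpleGraph (Fin (s - x)))
          (turanGraph (n - s + x) x)).cliqueSet s).ncard :=
  stmt9_general s t k n x hst hx hx1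
end

section
/- Let 1 ≤ a ≤ b ≤ t and s ≤ a with s ≤ t. Then every K_{s,t}-free graph G on n vertices contains at most C(n, s) · C(t-1, a) · C(t-1, b-s) copies of K_{a,b} (where C(·,·) denotes binomial coefficients). In particular the number of copies of K_{a,b} is O(n^s). -/
open SimpleGraph

universe u v

/-! A copy of `K_{a,b}` is determined by its sides `P` (of size `a`) and `Q` (of size `b`).
Fix an `s`-subset `S ⊆ Q`: then `P` lies in the common neighbourhood of `S` and `Q \ S` in the
common neighbourhood of `P`, and `K_{s,t}`-freeness bounds the common neighbourhood of any `s` or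
more vertices by `t - 1`. Hence `(P, Q)` is recovered from `S` (`C(n, s)` choices), `P`
(at most `C(t - 1, a)` choices) and `Q \ S` (at most `C(t - 1, b - s)` choices). -/

namespace SimpleGraph

variable {V : Type*} {G : SimpleGraph V}

namespace Subgraph

variable {γ : Type*} {H : SimpleGraph γ} {A : G.Subgraph}

lemma verts_eq_range_of_iso (e : H ≃g A.coe) : A.verts = Set.range fun x => (e x : V) := by
  ext v
  constructor
  · intro hv
    exact ⟨e.symm ⟨v, hv⟩, by simp⟩
  · rintro ⟨x, rfl⟩
    exact (e x).2

lemma adj_iff_of_iso (e : H ≃g A.coe) (u v : V) :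
    A.Adj u v ↔ ∃ x y, H.Adj x y ∧ (e x : V) = u ∧ (e y : V) = v := by
  conv_lhs => rw [← A.map_hom_top]
  simp only [map_adj, top_adj, Relation.Map]
  constructor
  · rintro ⟨x, y, h, rfl, rfl⟩
    exact ⟨e.symm x, e.symm y, e.symm.map_adj_iff.2 h, by simp, by simp⟩
  · rintro ⟨x, y, h, rfl, rfl⟩
    exact ⟨e x, e y, e.map_adj_iff.2 h, rfl, rfl⟩

def IsCompleteBipartiteOn (A : G.Subgraph) (P Q : Finset V) : Prop :=
  A.verts = ↑P ∪ ↑Q ∧ ∀ u v, A.Adj u v ↔ u ∈ P ∧ v ∈ Q ∨ v ∈ P ∧ u ∈ Q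

lemma IsCompleteBipartiteOn.unique {A₁ A₂ : G.Subgraph} {P Q : Finset V}
    (h₁ : A₁.IsCompleteBipartiteOn P Q) (h₂ : A₂.IsCompleteBipartiteOn P Q) : A₁ = A₂ := by
  ext u v
  · rw [h₁.1, h₂.1]
  · rw [h₁.2, h₂.2]

lemma IsCompleteBipartiteOn.adj {P Q : Finset V} (h : A.IsCompleteBipartiteOn P Q)
    {p q : V} (hp : p ∈ P) (hq : q ∈ Q) : G.Adj p q :=
  A.adj_sub <| (h.2 p q).2 <| .inl ⟨hp, hq⟩

lemma exists_isCompleteBipartiteOn [DecidableEq V] {α β : Type*} [Fintype α] [Fintype β]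
    (e : completeBipartiteGraph α β ≃g A.coe) :
    ∃ P Q : Finset V, P.card = Fintype.card α ∧ Q.card = Fintype.card β ∧
      A.IsCompleteBipartiteOn P Q := by
  have hinj : Function.Injective fun x => (e x : V) :=
    Subtype.val_injective.comp e.injective
  refine ⟨Finset.univ.image fun i => (e (.inl i) : V),
    Finset.univ.image fun j => (e (.inr j) : V), ?_, ?_, ?_, fun u v => ?_⟩
  · exact Finset.card_image_of_injective _ (hinj.comp Sum.inl_injective)
  · exact Finset.card_image_of_injective _ (hinj.comp Sum.inr_injective)
  · ext v
    simp [verts_eq_range_of_iso e, Sum.exists]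
  · rw [adj_iff_of_iso e]
    simp [completeBipartiteGraph, Sum.exists, and_comm]

end Subgraph

variable [Fintype V] [DecidableRel G.Adj]

def commonNbhd (G : SimpleGraph V) [DecidableRel G.Adj] (S : Finset V) : Finset V :=
  Finset.univ.filter fun v => ∀ u ∈ S, G.Adj u v

@[simp]
lemma mem_commonNbhd {S : Finset V} {v : V} : v ∈ G.commonNbhd S ↔ ∀ u ∈ S, G.Adj u v := by
  simp [commonNbhd]

lemma commonNbhd_anti {S S' : Finset V} (h : S ⊆ S') : G.commonNbhd S' ⊆ G.commonNbhd S :=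
  fun _ hv => mem_commonNbhd.2 fun u hu => mem_commonNbhd.1 hv u (h hu)

lemma contains_completeBipartiteGraph_of_subset_commonNbhd {s t : ℕ} {S T : Finset V}
    (hS : S.card = s) (hT : T.card = t) (hTS : T ⊆ G.commonNbhd S) :
    Contains (completeBipartiteGraph (Fin s) (Fin t)) G := by
  set f : Fin s → V := fun i => (S.equivFinOfCardEq hS).symm i
  set g : Fin t → V := fun j => (T.equivFinOfCardEq hT).symm j
  have hadj i j : G.Adj (f i) (g j) :=
    mem_commonNbhd.1 (hTS ((T.equivFinOfCardEq hT).symm j).2) _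
      ((S.equivFinOfCardEq hS).symm i).2
  have hf : Function.Injective f := Subtype.val_injective.comp (Equiv.injective _)
  have hg : Function.Injective g := Subtype.val_injective.comp (Equiv.injective _)
  refine ⟨⟨Sum.elim f g, hf.sumElim hg fun i j => (hadj i j).ne, ?_⟩⟩
  rintro (i | i) (j | j) h
  · simp [completeBipartiteGraph] at h
  · exact hadj i j
  · exact (hadj j i).symm
  · simp [completeBipartiteGraph] at h

lemma card_commonNbhd_lt {s t : ℕ}
    (hfree : ¬ Contains (completeBipartiteGraph (Fin s) (Fin t)) G) {S : Finset V}
    (hS : s ≤ S.card) : (G.commonNbhd S).card < t := by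
  obtain ⟨S', hS'S, hS'⟩ := Finset.exists_subset_card_eq hS
  by_contra! ht
  obtain ⟨T, hTN, hT⟩ := Finset.exists_subset_card_eq ht
  exact hfree <| contains_completeBipartiteGraph_of_subset_commonNbhd hS' hT <|
    hTN.trans (commonNbhd_anti hS'S)

def bicliquePairs (G : SimpleGraph V) [DecidableRel G.Adj] (a b : ℕ) :
    Finset (Finset V × Finset V) :=
  Finset.univ.filter fun PQ => PQ.1.card = a ∧ PQ.2.card = b ∧ ∀ p ∈ PQ.1, ∀ q ∈ PQ.2, G.Adj p q

lemma copyCount_completeBipartiteGraph_le_card_bicliquePairs {α β : Type*} [Fintype α]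
    [Fintype β] : _root_.copyCount (completeBipartiteGraph α β) G ≤
      (G.bicliquePairs (Fintype.card α) (Fintype.card β)).card := by
  classical
  have hsides : ∀ A ∈ {A : G.Subgraph | Nonempty (completeBipartiteGraph α β ≃g A.coe)},
      ∃ PQ ∈ G.bicliquePairs (Fintype.card α) (Fintype.card β),
        A.IsCompleteBipartiteOn PQ.1 PQ.2 := by
    rintro A ⟨e⟩
    obtain ⟨P, Q, hP, hQ, hA⟩ := Subgraph.exists_isCompleteBipartiteOn e
    exact ⟨(P, Q), by simpa [bicliquePairs, hP, hQ] using fun p hp q hq => hA.adj hp hq, hA⟩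
  choose! sides hmem hA using hsides
  rw [_root_.copyCount, ← Set.ncard_coe_finset]
  refine Set.ncard_le_ncard_of_injOn sides hmem (fun A₁ h₁ A₂ h₂ h => ?_) (Finset.finite_toSet _)
  exact (hA A₁ h₁).unique (h ▸ hA A₂ h₂)

open Finset in
lemma card_bicliquePairs_le {a b s t : ℕ}
    (hfree : ¬ Contains (completeBipartiteGraph (Fin s) (Fin t)) G) (hsa : s ≤ a) (hsb : s ≤ b) :
    (G.bicliquePairs a b).card ≤
      (Fintype.card V).choose s * (t - 1).choose a * (t - 1).choose (b - s) := by
  classical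
  have hN {S : Finset V} (hS : s ≤ S.card) : (G.commonNbhd S).card ≤ t - 1 :=
    Nat.le_pred_of_lt (card_commonNbhd_lt hfree hS)
  have hsub : G.bicliquePairs a b ⊆ (univ.powersetCard s).biUnion fun S =>
      ((G.commonNbhd S).powersetCard a).biUnion fun P =>
        ((G.commonNbhd P).powersetCard (b - s)).image fun R => (P, S ∪ R) := by
    rintro ⟨P, Q⟩ hPQ
    obtain ⟨hP, hQ, hadj⟩ : P.card = a ∧ Q.card = b ∧ ∀ p ∈ P, ∀ q ∈ Q, G.Adj p q := by
      simpa [bicliquePairs] using hPQ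
    obtain ⟨S, hSQ, hS⟩ := exists_subset_card_eq (hQ ▸ hsb)
    simp only [mem_biUnion, mem_powersetCard, mem_image]
    refine ⟨S, ⟨subset_univ _, hS⟩, P, ⟨?_, hP⟩, Q \ S, ⟨?_, ?_⟩,
      by rw [union_sdiff_of_subset hSQ]⟩
    · exact fun p hp => mem_commonNbhd.2 fun q hq => (hadj p hp q (hSQ hq)).symm
    · exact fun q hq => mem_commonNbhd.2 fun p hp => hadj p hp q (sdiff_subset hq)
    · rw [card_sdiff_of_subset hSQ, hS, hQ]
  refine (card_le_card hsub).trans ?_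
  rw [mul_assoc, ← card_univ, ← card_powersetCard]
  refine card_biUnion_le_card_mul _ _ _ fun S hS => ?_
  refine (card_biUnion_le_card_mul _ _ ((t - 1).choose (b - s)) fun P hP =>
    card_image_le.trans ?_).trans ?_
  · rw [card_powersetCard]
    exact Nat.choose_le_choose _ (hN (hsa.trans (mem_powersetCard.1 hP).2.ge))
  · rw [card_powersetCard]
    exact Nat.mul_le_mul_right _ (Nat.choose_le_choose _ (hN (mem_powersetCard.1 hS).2.ge))

end SimpleGraph

theorem stmt11_general (a b s t n : ℕ) (hab : a ≤ b)
    (hsa : s ≤ a) (G : SimpleGraph (Fin n))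
    (hfree : ¬ Contains (completeBipartiteGraph (Fin s) (Fin t)) G) :
    _root_.copyCount (completeBipartiteGraph (Fin a) (Fin b)) G ≤
      n.choose s * (t - 1).choose a * (t - 1).choose (b - s) := by
  classical
  calc _root_.copyCount (completeBipartiteGraph (Fin a) (Fin b)) G
      ≤ (G.bicliquePairs a b).card := by
        simpa using
          copyCount_completeBipartiteGraph_le_card_bicliquePairs (G := G) (α := Fin a) (β := Fin b)
    _ ≤ n.choose s * (t - 1).choose a * (t - 1).choose (b - s) := by
        simpa using card_bicliquePairs_le hfree hsa (hsa.trans hab)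

/-- In a `K_{s,t}`-free graph on `n` vertices with `s ≤ a ≤ b ≤ t`,
the number of copies of `K_{a,b}` is at most `C(n,s)·C(t-1,a)·C(t-1,b-s)`. -/
theorem stmt11 (a b s t n : ℕ) (ha : 1 ≤ a) (hab : a ≤ b) (hbt : b ≤ t)
    (hsa : s ≤ a) (hst : s ≤ t) (G : SimpleGraph (Fin n))
    (hfree : ¬ Contains (completeBipartiteGraph (Fin s) (Fin t)) G) :
    _root_.copyCount (completeBipartiteGraph (Fin a) (Fin b)) G ≤
      n.choose s * (t - 1).choose a * (t - 1).choose (b - s) :=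
  stmt11_general a b s t n hab hsa G hfree
end

section
/- Let a < s ≤ b ≤ t. The complete bipartite graph K_{s-1, n-s+1} is K_{s,t}-free and contains at least C(s-1, a) · C(n-s+1, b) copies of K_{a,b}, where C(·,·) denotes the binomial coefficient. -/
open SimpleGraph

universe u v

/-! Adjacent vertices of a complete bipartite graph lie on opposite sides, so a copy of
`K_{s,t}` in `K_{p,q}` sends one of its sides entirely into the part of size `p`; hence it needs
`min s t ≤ p`, which fails for `p = s - 1`. On the other hand, every pair of an `a`-subset of the
left part and a `b`-subset of the right part spans its own copy of `K_{a,b}`. -/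

variable {α β γ δ α' β' : Type*}

theorem Fintype.card_le_of_injective_of_forall_isLeft [Fintype α] [Fintype γ] {f : α → γ ⊕ δ}
    (hf : Function.Injective f) (hleft : ∀ x, (f x).isLeft) :
    Fintype.card α ≤ Fintype.card γ :=
  Fintype.card_le_of_injective (fun x => (f x).getLeft (hleft x)) fun x y hxy => hf <| by
    rw [← Sum.inl_getLeft (f x) (hleft x), ← Sum.inl_getLeft (f y) (hleft y)]
    exact congrArg Sum.inl hxy

theorem SimpleGraph.isLeft_of_completeBipartiteGraph_adj {v w : γ ⊕ δ}
    (hvw : (completeBipartiteGraph γ δ).Adj v w) (hv : v.isRight) : w.isLeft := by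
  cases v <;> cases w <;> simp_all

theorem not_contains_completeBipartiteGraph_of_card_lt [Fintype α] [Fintype β] [Fintype γ]
    (hα : Fintype.card γ < Fintype.card α) (hβ : Fintype.card γ < Fintype.card β) :
    ¬ Contains (completeBipartiteGraph α β) (completeBipartiteGraph γ δ) := by
  rintro ⟨f⟩
  by_cases hleft : ∀ i, (f.toFun (.inl i)).isLeft
  · exact hα.not_ge <| Fintype.card_le_of_injective_of_forall_isLeft
      (f.inj.comp Sum.inl_injective) hleft
  · obtain ⟨i, hi⟩ := not_forall.mp hleft
    refine hβ.not_ge <| Fintype.card_le_of_injective_of_forall_isLeft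
      (f := fun j => f.toFun (.inr j)) (f.inj.comp Sum.inr_injective) fun j => ?_
    exact isLeft_of_completeBipartiteGraph_adj (f.adj (by simp)) (Sum.not_isLeft.mp hi)

def SimpleGraph.Embedding.completeBipartiteGraphMap (f : α' ↪ α) (g : β' ↪ β) :
    completeBipartiteGraph α' β' ↪g completeBipartiteGraph α β where
  toEmbedding := f.sumMap g
  map_rel_iff' := by rintro (_ | _) (_ | _) <;> simp

def SimpleGraph.completeBipartiteSubgraph (S : Set α) (T : Set β) :
    (completeBipartiteGraph α β).Subgraph :=
  (Embedding.completeBipartiteGraphMap (Function.Embedding.subtype (· ∈ S))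
    (Function.Embedding.subtype (· ∈ T))).toCopy.toSubgraph

theorem SimpleGraph.completeBipartiteSubgraph_verts (S : Set α) (T : Set β) :
    (completeBipartiteSubgraph S T).verts = Sum.inl '' S ∪ Sum.inr '' T := by
  ext (x | y) <;> simp [completeBipartiteSubgraph, Embedding.completeBipartiteGraphMap]

theorem SimpleGraph.completeBipartiteSubgraph_injective :
    Function.Injective fun ST : Set α × Set β => completeBipartiteSubgraph ST.1 ST.2 := by
  rintro ⟨S, T⟩ ⟨S', T'⟩ h
  have hverts := congrArg Subgraph.verts h
  simp only [completeBipartiteSubgraph_verts] at hverts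
  have hS := congrArg (Sum.inl ⁻¹' ·) hverts
  have hT := congrArg (Sum.inr ⁻¹' ·) hverts
  simp only [Set.preimage_union, Set.preimage_image_eq _ Sum.inl_injective,
    Set.preimage_image_eq _ Sum.inr_injective, Set.preimage_inl_image_inr,
    Set.preimage_inr_image_inl, Set.union_empty, Set.empty_union] at hS hT
  rw [hS, hT]

theorem SimpleGraph.nonempty_iso_completeBipartiteSubgraph (S : Set α) (T : Set β) :
    Nonempty (completeBipartiteGraph S T ≃g (completeBipartiteSubgraph S T).coe) :=
  ⟨Copy.isoToSubgraph _⟩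

theorem choose_mul_choose_le_copyCount_completeBipartiteGraph
    [Fintype α] [Fintype β] [Fintype α'] [Fintype β'] :
    (Fintype.card α).choose (Fintype.card α') * (Fintype.card β).choose (Fintype.card β') ≤
      _root_.copyCount (completeBipartiteGraph α' β') (completeBipartiteGraph α β) := by
  classical
  let pairs : Finset (Finset α × Finset β) :=
    Finset.univ.powersetCard (Fintype.card α') ×ˢ Finset.univ.powersetCard (Fintype.card β')
  have hpairs : (pairs : Set (Finset α × Finset β)).ncard =
      (Fintype.card α).choose (Fintype.card α') * (Fintype.card β).choose (Fintype.card β') := by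
    simp [pairs]
  rw [← hpairs]
  refine Set.ncard_le_ncard_of_injOn (fun ST => completeBipartiteSubgraph (ST.1 : Set α) ST.2)
    ?_ ?_
  · rintro ⟨S, T⟩ hST
    simp only [pairs, Finset.coe_product, Set.mem_prod, Finset.mem_coe,
      Finset.mem_powersetCard] at hST
    obtain ⟨e⟩ := nonempty_iso_completeBipartiteSubgraph (S : Set α) (T : Set β)
    exact ⟨(completeBipartiteGraphCongr (Fintype.equivOfCardEq (by simp [hST.1.2]))
      (Fintype.equivOfCardEq (by simp [hST.2.2]))).trans e⟩
  · exact (completeBipartiteSubgraph_injective.comp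
      (Finset.coe_injective.prodMap Finset.coe_injective)).injOn

theorem stmt12_general (a b s t n : ℕ) (has : a < s) (hsb : s ≤ b) (hbt : b ≤ t) :
    ¬ Contains (completeBipartiteGraph (Fin s) (Fin t))
        (completeBipartiteGraph (Fin (s - 1)) (Fin (n - s + 1)))
    ∧ (s - 1).choose a * (n - s + 1).choose b ≤
        _root_.copyCount (completeBipartiteGraph (Fin a) (Fin b))
          (completeBipartiteGraph (Fin (s - 1)) (Fin (n - s + 1))) := by
  refine ⟨not_contains_completeBipartiteGraph_of_card_lt ?_ ?_, ?_⟩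
  · simp only [Fintype.card_fin]; omega
  · simp only [Fintype.card_fin]; omega
  · simpa using choose_mul_choose_le_copyCount_completeBipartiteGraph
      (α := Fin (s - 1)) (β := Fin (n - s + 1)) (α' := Fin a) (β' := Fin b)

/-- For `a < s ≤ b ≤ t`, the graph `K_{s-1, n-s+1}` is `K_{s,t}`-free
and contains at least `C(s-1,a)·C(n-s+1,b)` copies of `K_{a,b}`. -/
theorem stmt12 (a b s t n : ℕ) (has : a < s) (hsb : s ≤ b) (hbt : b ≤ t) (hn : s ≤ n) :
    ¬ Contains (completeBipartiteGraph (Fin s) (Fin t))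
        (completeBipartiteGraph (Fin (s - 1)) (Fin (n - s + 1)))
    ∧ (s - 1).choose a * (n - s + 1).choose b ≤
        _root_.copyCount (completeBipartiteGraph (Fin a) (Fin b))
          (completeBipartiteGraph (Fin (s - 1)) (Fin (n - s + 1))) :=
  stmt12_general a b s t n has hsb hbt
end
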